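/- arXiv:2504.21316 — 2 statements merged into one kernel-verified Lean document; each statement's English description precedes it below -/
import Mathlib

section
/- Consider the linear time-varying second-order scalar differential equation ψ'' + a₁(t) ψ' + a₀(t) ψ = 0, where a₀, a₁ : [0,∞) → ℝ are non-negative, continuous and bounded functions of time and a₀ is differentiable. If (i) there exists α₁ > 0 such that |a₀'(t)| + |a₁(t)| ≤ α₁ for all t ≥ 0, and (ii) there exists α₂ > 0 such that 0 < α₂ ≤ a₀'(t) + 2 a₀(t) a₁(t) for all t ≥ 0, then the zero solution of the equation is uniformly asymptotically stable: (a) for every ε > 0 there exists δ > 0 such that for every t₀ ≥ 0 and every twice-differentiable solution ψ with |ψ(t₀)| + |ψ'(t₀)| < δ one has |ψ(t)| + |ψ'(t)| < ε for all t ≥ t₀; and (b) there exists δ₀ > 0 such that for every ε > 0 there exists T > 0 so that every solution with |ψ(t₀)| + |ψ'(t₀)| < δ₀ satisfies |ψ(t)| + |ψ'(t)| < ε for all t ≥ t₀ + T. -/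
/-!
Since `|a₁| ≤ α₁`, condition (ii) forces `a₀' ≥ α₂ / 2` wherever `a₀ < c := α₂ / (4 α₁)`, and a
barrier argument shows `c ≤ a₀` from time `1 / α₁` on. There `V = ψ² + ψ'² / a₀ + γ ψ ψ'`, for a
small weight `γ > 0`, is comparable to the energy `E = ψ² + ψ'²`, and along solutions
`V' ≤ -(γ c / 2) E`: the `1 / a₀` weight turns `a₀' + 2 a₀ a₁ ≥ α₂` into damping of `ψ'`, and the
cross term damps `ψ`. So `E` decays exponentially after time `1 / α₁`, while before it `E` grows
at most like `exp ((M + 1) t)`. Hence `E t ≤ K E t₀ exp (-μ (t - t₀))` with `K, μ` independent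
of `t₀`, which gives both uniform stability and uniform attractivity.
-/

open Set Filter Topology Real

theorem le_mul_exp_of_hasDerivAt_le {f f' : ℝ → ℝ} {K s : ℝ}
    (hf : ∀ x ≥ s, HasDerivAt f (f' x) x) (bound : ∀ x ≥ s, f' x ≤ K * f x) :
    ∀ t ≥ s, f t ≤ f s * exp (K * (t - s)) := by
  intro t ht
  have := le_gronwallBound_of_liminf_deriv_right_le (ε := 0) (b := t)
    (fun x hx => (hf x hx.1).continuousAt.continuousWithinAt)
    (fun x hx r hr => (hf x hx.1).hasDerivWithinAt.liminf_right_slope_le hr)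
    le_rfl (fun x hx => by simpa using bound x hx.1) t ⟨ht, le_rfl⟩
  rwa [gronwallBound_ε0] at this

theorem le_mul_exp_neg_of_lyapunov {V V' E : ℝ → ℝ} {m C ρ s : ℝ} (hm : 0 ≤ m) (hC : 0 < C)
    (hρ : 0 ≤ ρ) (hV : ∀ x ≥ s, HasDerivAt V (V' x) x) (hV' : ∀ x ≥ s, V' x ≤ -ρ * E x)
    (hlow : ∀ x ≥ s, E x ≤ m * V x) (hup : ∀ x ≥ s, V x ≤ C * E x) :
    ∀ t ≥ s, E t ≤ m * C * E s * exp (-(ρ / C) * (t - s)) := by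
  have hdecay := le_mul_exp_of_hasDerivAt_le (K := -(ρ / C)) hV fun x hx => by
    have : ρ / C * V x ≤ ρ * E x := by
      calc ρ / C * V x ≤ ρ / C * (C * E x) := by gcongr; exact hup x hx
        _ = ρ * E x := by field_simp
    linarith [hV' x hx]
  intro t ht
  calc E t ≤ m * V t := hlow t ht
    _ ≤ m * (V s * exp (-(ρ / C) * (t - s))) := by gcongr; exact hdecay t ht
    _ ≤ m * (C * E s * exp (-(ρ / C) * (t - s))) := by gcongr; exact hup s le_rfl
    _ = m * C * E s * exp (-(ρ / C) * (t - s)) := by ring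

theorem le_mul_exp_neg_of_growth_of_decay {E : ℝ → ℝ} {G K μ T t₀ s : ℝ} (hG : 0 ≤ G)
    (hμ : 0 ≤ μ) (hK : 1 ≤ K) (hE : 0 ≤ E t₀) (hs : t₀ ≤ s) (hsT : s ≤ t₀ + T)
    (hgrowth : ∀ t ∈ Icc t₀ s, E t ≤ E t₀ * exp (G * (t - t₀)))
    (hdecay : ∀ t ≥ s, E t ≤ K * E s * exp (-μ * (t - s))) :
    ∀ t ≥ t₀, E t ≤ K * exp ((G + μ) * T) * E t₀ * exp (-μ * (t - t₀)) := by
  intro t ht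
  have hsplit : K * exp ((G + μ) * T) * E t₀ * exp (-μ * (t - t₀))
      = K * E t₀ * exp ((G + μ) * T - μ * (t - t₀)) := by
    rw [show (G + μ) * T - μ * (t - t₀) = (G + μ) * T + -μ * (t - t₀) by ring, exp_add]; ring
  rw [hsplit]
  rcases le_total t s with hts | hst
  · calc E t ≤ E t₀ * exp (G * (t - t₀)) := hgrowth t ⟨ht, hts⟩
      _ ≤ E t₀ * exp ((G + μ) * T - μ * (t - t₀)) := by
          gcongr
          nlinarith [mul_le_mul_of_nonneg_left (by linarith : t - t₀ ≤ T) (add_nonneg hG hμ)]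
      _ ≤ K * E t₀ * exp ((G + μ) * T - μ * (t - t₀)) := by
          rw [mul_assoc]; exact le_mul_of_one_le_left (by positivity) hK
  · calc E t ≤ K * E s * exp (-μ * (t - s)) := hdecay t hst
      _ ≤ K * (E t₀ * exp (G * (s - t₀))) * exp (-μ * (t - s)) := by
          gcongr; exact hgrowth s ⟨hs, le_rfl⟩
      _ = K * E t₀ * exp (G * (s - t₀) + -μ * (t - s)) := by rw [exp_add]; ring
      _ ≤ K * E t₀ * exp ((G + μ) * T - μ * (t - t₀)) := by
          gcongr
          nlinarith [mul_le_mul_of_nonneg_left (by linarith : s - t₀ ≤ T) (add_nonneg hG hμ)]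

theorem le_of_lt_deriv_of_lt {g : ℝ → ℝ} {c κ : ℝ} (hc : 0 < c) (hκ : 0 < κ)
    (hg : ∀ x ≥ 0, DifferentiableAt ℝ g x) (hg0 : 0 ≤ g 0)
    (hslope : ∀ x ≥ 0, g x < c → κ < deriv g x) : ∀ t ≥ c / κ, c ≤ g t := by
  intro t ht
  by_contra! hgt
  have hct : c ≤ κ * t := by rwa [ge_iff_le, div_le_iff₀ hκ, mul_comm] at ht
  have ht0 : 0 ≤ t := by nlinarith
  -- Backwards in time from `t`, `g` stays below `c`, so it keeps decreasing at rate more than `κ`.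
  have hback : ∀ x ∈ Icc 0 t, g (t - x) ≤ g t - κ * x := by
    have hder : ∀ x ∈ Icc 0 t, HasDerivAt (fun y => g (t - y)) (-deriv g (t - x)) x :=
      fun x hx => (hg (t - x) (by linarith [hx.2])).hasDerivAt.comp_const_sub t x
    refine image_le_of_deriv_right_lt_deriv_boundary' (B' := fun _ => -κ)
      (fun x hx => (hder x hx).continuousAt.continuousWithinAt)
      (fun x hx => (hder x (Ico_subset_Icc_self hx)).hasDerivWithinAt) (by simp) (by fun_prop)
      (fun x _ => by simpa using (((hasDerivAt_id x).const_mul κ).const_sub (g t)).hasDerivWithinAt)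
      fun x hx hxB => ?_
    have := hslope (t - x) (by linarith [hx.2]) (by nlinarith [hx.1])
    simpa using neg_lt_neg this
  have := hback t ⟨ht0, le_rfl⟩
  rw [sub_self] at this
  linarith

theorem uniform_stable_of_le_mul_exp_neg {α : Type*} {P : ℝ → α → Prop} {n : α → ℝ → ℝ}
    {L ν : ℝ} (hn : ∀ a t, 0 ≤ n a t) (hL : 0 < L) (hν : 0 ≤ ν)
    (h : ∀ t₀ ≥ (0 : ℝ), ∀ a, P t₀ a → ∀ t ≥ t₀, n a t ≤ L * n a t₀ * exp (-ν * (t - t₀))) :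
    ∀ ε > (0 : ℝ), ∃ δ > (0 : ℝ), ∀ t₀ ≥ (0 : ℝ), ∀ a, P t₀ a → n a t₀ < δ →
      ∀ t ≥ t₀, n a t < ε := by
  intro ε hε
  refine ⟨ε / L, by positivity, fun t₀ ht₀ a ha hsmall t ht => ?_⟩
  have hexp : exp (-ν * (t - t₀)) ≤ 1 := exp_le_one_iff.2 (by nlinarith)
  calc n a t ≤ L * n a t₀ * exp (-ν * (t - t₀)) := h t₀ ht₀ a ha t ht
    _ ≤ L * n a t₀ := mul_le_of_le_one_right (mul_nonneg hL.le (hn a t₀)) hexp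
    _ < L * (ε / L) := by gcongr
    _ = ε := by field_simp

theorem uniform_attractive_of_le_mul_exp_neg {α : Type*} {P : ℝ → α → Prop} {n : α → ℝ → ℝ}
    {L ν : ℝ} (hn : ∀ a t, 0 ≤ n a t) (hL : 0 < L) (hν : 0 < ν)
    (h : ∀ t₀ ≥ (0 : ℝ), ∀ a, P t₀ a → ∀ t ≥ t₀, n a t ≤ L * n a t₀ * exp (-ν * (t - t₀))) :
    ∃ δ₀ > (0 : ℝ), ∀ ε > (0 : ℝ), ∃ T > (0 : ℝ), ∀ t₀ ≥ (0 : ℝ), ∀ a, P t₀ a → n a t₀ < δ₀ →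
      ∀ t ≥ t₀ + T, n a t < ε := by
  refine ⟨1, one_pos, fun ε hε => ?_⟩
  have hlim : Tendsto (fun T => L * exp (-ν * T)) atTop (𝓝 0) := by
    simpa using (tendsto_exp_neg_atTop_nhds_zero.comp
      (tendsto_id.const_mul_atTop hν)).const_mul L
  obtain ⟨T, hTε, hT⟩ := ((hlim.eventually (gt_mem_nhds hε)).and (eventually_gt_atTop 0)).exists
  refine ⟨T, hT, fun t₀ ht₀ a ha hsmall t ht => ?_⟩
  calc n a t ≤ L * n a t₀ * exp (-ν * (t - t₀)) := h t₀ ht₀ a ha t (by linarith)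
    _ ≤ L * n a t₀ * exp (-ν * T) :=
        mul_le_mul_of_nonneg_left (exp_le_exp.2 (by nlinarith)) (mul_nonneg hL.le (hn a t₀))
    _ < L * 1 * exp (-ν * T) := by gcongr
    _ < ε := by simpa using hTε

noncomputable section

def IsSolutionFrom (a₀ a₁ : ℝ → ℝ) (t₀ : ℝ) (ψ : ℝ → ℝ) : Prop :=
  (∀ t ≥ t₀, DifferentiableAt ℝ ψ t ∧ DifferentiableAt ℝ (deriv ψ) t) ∧
    ∀ t ≥ t₀, deriv (deriv ψ) t + a₁ t * deriv ψ t + a₀ t * ψ t = 0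

def energy (ψ : ℝ → ℝ) (t : ℝ) : ℝ := ψ t ^ 2 + deriv ψ t ^ 2

def lyapunov (a₀ : ℝ → ℝ) (γ : ℝ) (ψ : ℝ → ℝ) (t : ℝ) : ℝ :=
  ψ t ^ 2 + deriv ψ t ^ 2 / a₀ t + γ * (ψ t * deriv ψ t)

def lyapunovRate (a₀ a₁ : ℝ → ℝ) (γ : ℝ) (ψ : ℝ → ℝ) (t : ℝ) : ℝ :=
  -(deriv a₀ t + 2 * a₀ t * a₁ t) * deriv ψ t ^ 2 / a₀ t ^ 2
    + γ * (deriv ψ t ^ 2 - a₁ t * ψ t * deriv ψ t - a₀ t * ψ t ^ 2)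

end

theorem two_mul_abs_mul_le_energy (ψ : ℝ → ℝ) (t : ℝ) :
    2 * |ψ t * deriv ψ t| ≤ energy ψ t := by
  simpa [energy, abs_mul, sq_abs, mul_assoc] using two_mul_le_add_sq |ψ t| |deriv ψ t|

section Lyapunov

variable {a₀ a₁ ψ : ℝ → ℝ} {γ t : ℝ}

theorem lyapunov_le {c : ℝ} (hc : 0 < c) (hca : c ≤ a₀ t) (hγ : |γ| ≤ 2) :
    lyapunov a₀ γ ψ t ≤ (2 + c⁻¹) * energy ψ t := by
  have hq : deriv ψ t ^ 2 / a₀ t ≤ c⁻¹ * deriv ψ t ^ 2 := by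
    rw [div_eq_inv_mul]; gcongr
  have hpq : γ * (ψ t * deriv ψ t) ≤ |γ| * |ψ t * deriv ψ t| := by
    rw [← abs_mul]; exact le_abs_self _
  have := two_mul_abs_mul_le_energy ψ t
  unfold lyapunov energy at *
  nlinarith [inv_pos.2 hc, sq_nonneg (deriv ψ t), abs_nonneg (ψ t * deriv ψ t)]

theorem energy_le_lyapunov {M : ℝ} (ha : 0 < a₀ t) (haM : a₀ t ≤ M) (hM : 1 ≤ M)
    (hγ : |γ| * M ≤ 1) : energy ψ t ≤ 2 * M * lyapunov a₀ γ ψ t := by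
  have hq : deriv ψ t ^ 2 ≤ M * (deriv ψ t ^ 2 / a₀ t) := by
    rw [mul_div_assoc', le_div_iff₀ ha, mul_comm M]
    exact mul_le_mul_of_nonneg_left haM (sq_nonneg _)
  have hpq : -(γ * (ψ t * deriv ψ t)) ≤ |γ| * |ψ t * deriv ψ t| := by
    rw [← abs_mul]; exact neg_le_abs _
  have := two_mul_abs_mul_le_energy ψ t
  unfold lyapunov energy at *
  nlinarith [mul_le_mul_of_nonneg_left hpq (by linarith : (0 : ℝ) ≤ 2 * M),
    mul_le_mul_of_nonneg_right hγ (abs_nonneg (ψ t * deriv ψ t)), sq_nonneg (ψ t)]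

theorem lyapunovRate_le {c M α₁ α₂ : ℝ} (hc : 0 < c) (hca : c ≤ a₀ t) (haM : a₀ t ≤ M)
    (ha₁ : |a₁ t| ≤ α₁) (hα₂ : α₂ ≤ deriv a₀ t + 2 * a₀ t * a₁ t) (hγ : 0 ≤ γ)
    (hγα : γ * (2 * c + α₁ ^ 2 + c ^ 2) * M ^ 2 ≤ 2 * c * α₂) :
    lyapunovRate a₀ a₁ γ ψ t ≤ -(γ * c / 2) * energy ψ t := by
  set p := ψ t
  set q := deriv ψ t
  set A := a₀ t
  set b := a₁ t
  have hA : 0 < A := hc.trans_le hca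
  have hα₂0 : 0 ≤ α₂ := by
    have : 0 ≤ 2 * c * α₂ := le_trans (by positivity) hγα
    nlinarith
  have hdamp : -(deriv a₀ t + 2 * A * b) * q ^ 2 / A ^ 2 ≤ -(α₂ / M ^ 2) * q ^ 2 := by
    have h := div_le_div₀ (by linarith) hα₂ (by positivity) (pow_le_pow_left₀ hA.le haM 2)
    rw [neg_mul, neg_div, neg_mul, neg_le_neg_iff, mul_div_right_comm]
    exact mul_le_mul_of_nonneg_right h (sq_nonneg q)
  have hcross : -(b * p * q) ≤ c / 2 * p ^ 2 + α₁ ^ 2 / (2 * c) * q ^ 2 := by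
    have hb : 0 ≤ α₁ ^ 2 - b ^ 2 :=
      sub_nonneg.2 (by simpa [sq_abs] using pow_le_pow_left₀ (abs_nonneg b) ha₁ 2)
    have h : c / 2 * p ^ 2 + α₁ ^ 2 / (2 * c) * q ^ 2 + b * p * q
        = ((c * p + b * q) ^ 2 + (α₁ ^ 2 - b ^ 2) * q ^ 2) / (2 * c) := by
      field_simp; ring
    have : 0 ≤ ((c * p + b * q) ^ 2 + (α₁ ^ 2 - b ^ 2) * q ^ 2) / (2 * c) := by positivity
    linarith
  have hγ' : γ * (1 + α₁ ^ 2 / (2 * c) + c / 2) ≤ α₂ / M ^ 2 := by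
    have hM : 0 < M := hA.trans_le haM
    rw [le_div_iff₀ (by positivity), show γ * (1 + α₁ ^ 2 / (2 * c) + c / 2) * M ^ 2
      = γ * (2 * c + α₁ ^ 2 + c ^ 2) * M ^ 2 / (2 * c) by field_simp,
      div_le_iff₀ (by positivity)]
    linarith
  unfold lyapunovRate energy
  nlinarith [mul_le_mul_of_nonneg_left hcross hγ, mul_le_mul_of_nonneg_right hγ' (sq_nonneg q),
    mul_le_mul_of_nonneg_left (mul_le_mul_of_nonneg_right hca (sq_nonneg p)) hγ]

theorem exists_lyapunov_weight {c M α₁ α₂ : ℝ} (hc : 0 < c) (hM : 0 < M) (hα₂ : 0 < α₂) :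
    ∃ γ > 0, γ * M ≤ 1 ∧ γ * (2 * c + α₁ ^ 2 + c ^ 2) * M ^ 2 ≤ 2 * c * α₂ := by
  refine ⟨min M⁻¹ (2 * c * α₂ / ((2 * c + α₁ ^ 2 + c ^ 2) * M ^ 2)),
    lt_min (by positivity) (by positivity), ?_, ?_⟩
  · calc _ ≤ M⁻¹ * M := by gcongr; exact min_le_left _ _
      _ = 1 := inv_mul_cancel₀ hM.ne'
  · rw [mul_assoc, ← le_div_iff₀ (by positivity)]
    exact min_le_right _ _

end Lyapunov

namespace IsSolutionFrom

variable {a₀ a₁ ψ : ℝ → ℝ} {t₀ : ℝ}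

theorem mono (hψ : IsSolutionFrom a₀ a₁ t₀ ψ) {s : ℝ} (hs : t₀ ≤ s) :
    IsSolutionFrom a₀ a₁ s ψ :=
  ⟨fun t ht => hψ.1 t (hs.trans ht), fun t ht => hψ.2 t (hs.trans ht)⟩

theorem deriv_deriv_eq (hψ : IsSolutionFrom a₀ a₁ t₀ ψ) {t : ℝ} (ht : t₀ ≤ t) :
    deriv (deriv ψ) t = -(a₁ t * deriv ψ t) - a₀ t * ψ t := by
  linarith [hψ.2 t ht]

theorem hasDerivAt_energy (hψ : IsSolutionFrom a₀ a₁ t₀ ψ) {t : ℝ} (ht : t₀ ≤ t) :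
    HasDerivAt (energy ψ)
      (2 * (1 - a₀ t) * (ψ t * deriv ψ t) - 2 * a₁ t * deriv ψ t ^ 2) t := by
  obtain ⟨hψ₁, hψ₂⟩ := hψ.1 t ht
  refine ((hψ₁.hasDerivAt.fun_pow 2).add (hψ₂.hasDerivAt.fun_pow 2)).congr_deriv ?_
  rw [hψ.deriv_deriv_eq ht]
  ring

theorem energy_le_mul_exp {M : ℝ} (hψ : IsSolutionFrom a₀ a₁ t₀ ψ)
    (ha₀ : ∀ t ≥ t₀, |a₀ t| ≤ M) (ha₁ : ∀ t ≥ t₀, 0 ≤ a₁ t) :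
    ∀ t ≥ t₀, energy ψ t ≤ energy ψ t₀ * exp ((M + 1) * (t - t₀)) := by
  refine le_mul_exp_of_hasDerivAt_le (fun t ht => hψ.hasDerivAt_energy ht) fun t ht => ?_
  have h1 : |1 - a₀ t| ≤ M + 1 := by
    have := abs_sub (1 : ℝ) (a₀ t)
    rw [abs_one] at this
    linarith [ha₀ t ht]
  have h2 := mul_le_mul h1 (two_mul_abs_mul_le_energy ψ t) (by positivity)
    ((abs_nonneg _).trans h1)
  nlinarith [le_abs_self ((1 - a₀ t) * (ψ t * deriv ψ t)), abs_mul (1 - a₀ t) (ψ t * deriv ψ t),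
    mul_nonneg (ha₁ t ht) (sq_nonneg (deriv ψ t))]

theorem hasDerivAt_lyapunov {γ t : ℝ} (hψ : IsSolutionFrom a₀ a₁ t₀ ψ) (ht : t₀ ≤ t)
    (ha : DifferentiableAt ℝ a₀ t) (ha₀ : a₀ t ≠ 0) :
    HasDerivAt (lyapunov a₀ γ ψ) (lyapunovRate a₀ a₁ γ ψ t) t := by
  obtain ⟨hψ₁, hψ₂⟩ := hψ.1 t ht
  refine (((hψ₁.hasDerivAt.fun_pow 2).add ((hψ₂.hasDerivAt.fun_pow 2).div ha.hasDerivAt ha₀)).add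
    ((hψ₁.hasDerivAt.mul hψ₂.hasDerivAt).const_mul γ)).congr_deriv ?_
  rw [hψ.deriv_deriv_eq ht]
  unfold lyapunovRate
  field_simp
  ring

theorem energy_le_mul_exp_neg {c M α₁ α₂ γ : ℝ} (hψ : IsSolutionFrom a₀ a₁ t₀ ψ) (hc : 0 < c)
    (hM : 1 ≤ M) (hca : ∀ t ≥ t₀, c ≤ a₀ t) (haM : ∀ t ≥ t₀, a₀ t ≤ M)
    (ha : ∀ t ≥ t₀, DifferentiableAt ℝ a₀ t) (ha₁ : ∀ t ≥ t₀, |a₁ t| ≤ α₁)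
    (hα₂ : ∀ t ≥ t₀, α₂ ≤ deriv a₀ t + 2 * a₀ t * a₁ t) (hγ : 0 ≤ γ) (hγM : γ * M ≤ 1)
    (hγα : γ * (2 * c + α₁ ^ 2 + c ^ 2) * M ^ 2 ≤ 2 * c * α₂) :
    ∀ t ≥ t₀, energy ψ t ≤
      2 * M * (2 + c⁻¹) * energy ψ t₀ * exp (-(γ * c / 2 / (2 + c⁻¹)) * (t - t₀)) :=
  le_mul_exp_neg_of_lyapunov (by positivity) (by positivity) (by positivity)
    (fun t ht => hψ.hasDerivAt_lyapunov ht (ha t ht) (hc.trans_le (hca t ht)).ne')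
    (fun t ht => lyapunovRate_le hc (hca t ht) (haM t ht) (ha₁ t ht) (hα₂ t ht) hγ hγα)
    (fun t ht => energy_le_lyapunov (hc.trans_le (hca t ht)) (haM t ht) hM
      (by rwa [abs_of_nonneg hγ]))
    (fun t ht => lyapunov_le hc (hca t ht) (by rw [abs_of_nonneg hγ]; nlinarith))

end IsSolutionFrom

theorem div_four_mul_le_of_inv_le {a₀ a₁ : ℝ → ℝ} {α₁ α₂ : ℝ} (hα₁ : 0 < α₁) (hα₂ : 0 < α₂)
    (ha₀ : ∀ t ≥ 0, 0 ≤ a₀ t) (hd : ∀ t ≥ 0, DifferentiableAt ℝ a₀ t)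
    (ha₁ : ∀ t ≥ 0, |a₁ t| ≤ α₁) (h_ii : ∀ t ≥ 0, α₂ ≤ deriv a₀ t + 2 * a₀ t * a₁ t) :
    ∀ t ≥ α₁⁻¹, α₂ / (4 * α₁) ≤ a₀ t := by
  have hT : α₂ / (4 * α₁) / (α₂ / 4) = α₁⁻¹ := by field_simp
  rw [← hT]
  refine le_of_lt_deriv_of_lt (by positivity) (by positivity) hd (ha₀ 0 le_rfl) fun x hx hxc => ?_
  have : 2 * a₀ x * a₁ x ≤ α₂ / 2 :=
    calc 2 * a₀ x * a₁ x ≤ 2 * a₀ x * |a₁ x| := by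
          have := ha₀ x hx; gcongr; exact le_abs_self _
      _ ≤ 2 * (α₂ / (4 * α₁)) * α₁ := by
          have := ha₀ x hx; gcongr; exact ha₁ x hx
      _ = α₂ / 2 := by field_simp; ring
  linarith [h_ii x hx]

theorem exists_energy_le_mul_exp_neg {a₀ a₁ : ℝ → ℝ} {M α₁ α₂ : ℝ} (hα₁ : 0 < α₁) (hα₂ : 0 < α₂)
    (ha₀ : ∀ t ≥ 0, 0 ≤ a₀ t) (ha₁ : ∀ t ≥ 0, 0 ≤ a₁ t) (ha₀M : ∀ t ≥ 0, |a₀ t| ≤ M)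
    (hd : ∀ t ≥ 0, DifferentiableAt ℝ a₀ t) (ha₁α : ∀ t ≥ 0, |a₁ t| ≤ α₁)
    (h_ii : ∀ t ≥ 0, α₂ ≤ deriv a₀ t + 2 * a₀ t * a₁ t) :
    ∃ K > 0, ∃ μ > 0, ∀ t₀ ≥ (0 : ℝ), ∀ ψ, IsSolutionFrom a₀ a₁ t₀ ψ →
      ∀ t ≥ t₀, energy ψ t ≤ K * energy ψ t₀ * exp (-μ * (t - t₀)) := by
  set c := α₂ / (4 * α₁)
  have hc : 0 < c := by positivity
  set M' := max M 1
  have hM' : 1 ≤ M' := le_max_right _ _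
  have haM : ∀ t ≥ 0, |a₀ t| ≤ M' := fun t ht => (ha₀M t ht).trans (le_max_left _ _)
  obtain ⟨γ, hγ, hγM, hγα⟩ := exists_lyapunov_weight (α₁ := α₁) hc (by positivity : 0 < M') hα₂
  set μ := γ * c / 2 / (2 + c⁻¹)
  refine ⟨2 * M' * (2 + c⁻¹) * exp ((M' + 1 + μ) * α₁⁻¹), by positivity, μ, by positivity,
    fun t₀ ht₀ ψ hψ => ?_⟩
  set s := max t₀ α₁⁻¹
  have hs : t₀ ≤ s := le_max_left _ _
  have hs0 : ∀ x ≥ s, 0 ≤ x := fun x hx => ht₀.trans (hs.trans hx)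
  refine le_mul_exp_neg_of_growth_of_decay (by positivity) (by positivity)
    (by nlinarith [inv_pos.2 hc]) (by unfold energy; positivity) hs
    (max_le (by linarith [inv_pos.2 hα₁]) (by linarith))
    (fun t ht => hψ.energy_le_mul_exp (fun x hx => haM x (ht₀.trans hx))
      (fun x hx => ha₁ x (ht₀.trans hx)) t ht.1) ?_
  exact (hψ.mono hs).energy_le_mul_exp_neg hc hM'
    (fun x hx => div_four_mul_le_of_inv_le hα₁ hα₂ ha₀ hd ha₁α h_ii x ((le_max_right _ _).trans hx))
    (fun x hx => (le_abs_self _).trans (haM x (hs0 x hx))) (fun x hx => hd x (hs0 x hx))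
    (fun x hx => ha₁α x (hs0 x hx)) (fun x hx => h_ii x (hs0 x hx)) hγ.le hγM hγα

theorem abs_add_abs_le_of_energy_le {ψ : ℝ → ℝ} {K μ t₀ t : ℝ} (hK : 0 ≤ K)
    (h : energy ψ t ≤ K * energy ψ t₀ * exp (-μ * (t - t₀))) :
    |ψ t| + |deriv ψ t| ≤ √(2 * K) * (|ψ t₀| + |deriv ψ t₀|) * exp (-(μ / 2) * (t - t₀)) := by
  refine le_of_pow_le_pow_left₀ two_ne_zero (by positivity) ?_
  have h₀ : energy ψ t₀ ≤ (|ψ t₀| + |deriv ψ t₀|) ^ 2 := by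
    have := mul_nonneg (abs_nonneg (ψ t₀)) (abs_nonneg (deriv ψ t₀))
    rw [energy, add_sq, sq_abs, sq_abs]
    linarith
  have hexp : exp (-(μ / 2) * (t - t₀)) ^ 2 = exp (-μ * (t - t₀)) := by
    rw [← exp_nat_mul]; ring_nf
  calc (|ψ t| + |deriv ψ t|) ^ 2 ≤ 2 * energy ψ t := by
        simpa [energy, sq_abs] using add_sq_le (a := |ψ t|) (b := |deriv ψ t|)
    _ ≤ 2 * (K * energy ψ t₀ * exp (-μ * (t - t₀))) := by gcongr
    _ ≤ 2 * (K * (|ψ t₀| + |deriv ψ t₀|) ^ 2 * exp (-μ * (t - t₀))) := by gcongr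
    _ = _ := by rw [mul_pow, mul_pow, hexp, sq_sqrt (by positivity)]; ring

theorem ignatyev_uniform_asymptotic_stability_general
    (a₀ a₁ : ℝ → ℝ)
    (ha₀_nonneg : ∀ t ≥ (0 : ℝ), 0 ≤ a₀ t)
    (ha₁_nonneg : ∀ t ≥ (0 : ℝ), 0 ≤ a₁ t)
    (ha₀_bdd : ∃ M : ℝ, ∀ t ≥ (0 : ℝ), |a₀ t| ≤ M)
    (ha₀_diff : ∀ t ≥ (0 : ℝ), DifferentiableAt ℝ a₀ t)
    (hcond_i : ∃ α₁ > (0 : ℝ), ∀ t ≥ (0 : ℝ), |deriv a₀ t| + |a₁ t| ≤ α₁)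
    (hcond_ii : ∃ α₂ > (0 : ℝ), ∀ t ≥ (0 : ℝ),
      α₂ ≤ deriv a₀ t + 2 * a₀ t * a₁ t) :
    -- (a) uniform stability
    (∀ ε > (0 : ℝ), ∃ δ > (0 : ℝ), ∀ t₀ ≥ (0 : ℝ), ∀ ψ : ℝ → ℝ,
      (∀ t ≥ t₀, DifferentiableAt ℝ ψ t ∧ DifferentiableAt ℝ (deriv ψ) t) →
      (∀ t ≥ t₀, deriv (deriv ψ) t + a₁ t * deriv ψ t + a₀ t * ψ t = 0) →
      |ψ t₀| + |deriv ψ t₀| < δ →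
      ∀ t ≥ t₀, |ψ t| + |deriv ψ t| < ε) ∧
    -- (b) uniform attractivity
    (∃ δ₀ > (0 : ℝ), ∀ ε > (0 : ℝ), ∃ T > (0 : ℝ), ∀ t₀ ≥ (0 : ℝ), ∀ ψ : ℝ → ℝ,
      (∀ t ≥ t₀, DifferentiableAt ℝ ψ t ∧ DifferentiableAt ℝ (deriv ψ) t) →
      (∀ t ≥ t₀, deriv (deriv ψ) t + a₁ t * deriv ψ t + a₀ t * ψ t = 0) →
      |ψ t₀| + |deriv ψ t₀| < δ₀ →
      ∀ t ≥ t₀ + T, |ψ t| + |deriv ψ t| < ε) := by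
  obtain ⟨M, hM⟩ := ha₀_bdd
  obtain ⟨α₁, hα₁, h_i⟩ := hcond_i
  obtain ⟨α₂, hα₂, h_ii⟩ := hcond_ii
  have ha₁ : ∀ t ≥ (0 : ℝ), |a₁ t| ≤ α₁ := fun t ht => by
    linarith [h_i t ht, abs_nonneg (deriv a₀ t)]
  obtain ⟨K, hK, μ, hμ, hE⟩ :=
    exists_energy_le_mul_exp_neg hα₁ hα₂ ha₀_nonneg ha₁_nonneg hM ha₀_diff ha₁ h_ii
  have hN : ∀ t₀ ≥ (0 : ℝ), ∀ ψ, IsSolutionFrom a₀ a₁ t₀ ψ → ∀ t ≥ t₀,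
      |ψ t| + |deriv ψ t| ≤ √(2 * K) * (|ψ t₀| + |deriv ψ t₀|) * exp (-(μ / 2) * (t - t₀)) :=
    fun t₀ ht₀ ψ hψ t ht => abs_add_abs_le_of_energy_le hK.le (hE t₀ ht₀ ψ hψ t ht)
  have hn : ∀ (ψ : ℝ → ℝ) t, 0 ≤ |ψ t| + |deriv ψ t| := fun _ _ => by positivity
  constructor
  · simpa only [IsSolutionFrom, and_imp] using
      uniform_stable_of_le_mul_exp_neg hn (by positivity) (by positivity) hN
  · simpa only [IsSolutionFrom, and_imp] using
      uniform_attractive_of_le_mul_exp_neg hn (by positivity) (by positivity) hN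

/-- Ignatyev's stability criterion for the linear time-varying second-order
equation `ψ'' + a₁(t) ψ' + a₀(t) ψ = 0`: under conditions (i) and (ii) the zero
solution is uniformly asymptotically stable (uniform stability together with
uniform attractivity, uniformly in the initial time `t₀`). -/
theorem ignatyev_uniform_asymptotic_stability
    (a₀ a₁ : ℝ → ℝ)
    (ha₀_nonneg : ∀ t ≥ (0 : ℝ), 0 ≤ a₀ t)
    (ha₁_nonneg : ∀ t ≥ (0 : ℝ), 0 ≤ a₁ t)
    (ha₀_cont : ContinuousOn a₀ (Set.Ici (0 : ℝ)))
    (ha₁_cont : ContinuousOn a₁ (Set.Ici (0 : ℝ)))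
    (ha₀_bdd : ∃ M : ℝ, ∀ t ≥ (0 : ℝ), |a₀ t| ≤ M)
    (ha₁_bdd : ∃ M : ℝ, ∀ t ≥ (0 : ℝ), |a₁ t| ≤ M)
    (ha₀_diff : ∀ t ≥ (0 : ℝ), DifferentiableAt ℝ a₀ t)
    (hcond_i : ∃ α₁ > (0 : ℝ), ∀ t ≥ (0 : ℝ), |deriv a₀ t| + |a₁ t| ≤ α₁)
    (hcond_ii : ∃ α₂ > (0 : ℝ), ∀ t ≥ (0 : ℝ),
      α₂ ≤ deriv a₀ t + 2 * a₀ t * a₁ t) :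
    -- (a) uniform stability
    (∀ ε > (0 : ℝ), ∃ δ > (0 : ℝ), ∀ t₀ ≥ (0 : ℝ), ∀ ψ : ℝ → ℝ,
      (∀ t ≥ t₀, DifferentiableAt ℝ ψ t ∧ DifferentiableAt ℝ (deriv ψ) t) →
      (∀ t ≥ t₀, deriv (deriv ψ) t + a₁ t * deriv ψ t + a₀ t * ψ t = 0) →
      |ψ t₀| + |deriv ψ t₀| < δ →
      ∀ t ≥ t₀, |ψ t| + |deriv ψ t| < ε) ∧
    -- (b) uniform attractivity
    (∃ δ₀ > (0 : ℝ), ∀ ε > (0 : ℝ), ∃ T > (0 : ℝ), ∀ t₀ ≥ (0 : ℝ), ∀ ψ : ℝ → ℝ,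
      (∀ t ≥ t₀, DifferentiableAt ℝ ψ t ∧ DifferentiableAt ℝ (deriv ψ) t) →
      (∀ t ≥ t₀, deriv (deriv ψ) t + a₁ t * deriv ψ t + a₀ t * ψ t = 0) →
      |ψ t₀| + |deriv ψ t₀| < δ₀ →
      ∀ t ≥ t₀ + T, |ψ t| + |deriv ψ t| < ε) :=
  ignatyev_uniform_asymptotic_stability_general a₀ a₁ ha₀_nonneg ha₁_nonneg ha₀_bdd ha₀_diff hcond_i
    hcond_ii
end

section
/- Let m > 0, κ > 0, σ > 0, β > 0 and ρ > 1. Set L₁ = 2ρ√(κ/m) and L₂ = σ/β + κ(1 − ρ²). Then for every p with 0 ≤ p ≤ κ, the real 2×2 matrix Ã = [[−L₁, −1/m], [p + σ/β − L₂, 0]] has exactly the two real eigenvalues λ₁ = −ρ√(κ/m) + √((κ − p)/m) and λ₂ = −ρ√(κ/m) − √((κ − p)/m), and both eigenvalues are strictly negative. -/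
open Polynomial

/-- Proposition 2 (core): with the gain assignment `L₁ = 2ρ√(κ/m)`,
`L₂ = σ/β + κ(1 − ρ²)` and `ρ > 1`, for every pre-sliding stiffness value
`p ∈ [0, κ]` the observer system matrix
`Aobs = [[−L₁, −1/m], [p + σ/β − L₂, 0]]` has exactly the two real eigenvalues
`lam₁ = −ρ√(κ/m) + √((κ − p)/m)` and `lam₂ = −ρ√(κ/m) − √((κ − p)/m)`
(i.e., its characteristic polynomial factors as `(X − lam₁)(X − lam₂)`), and
both eigenvalues are strictly negative. -/
theorem observer_eigenvalues_real_negative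
    (m κ σ β ρ : ℝ) (hm : 0 < m) (hκ : 0 < κ) (hσ : 0 < σ) (hβ : 0 < β)
    (hρ : 1 < ρ)
    (L₁ L₂ : ℝ) (hL₁ : L₁ = 2 * ρ * Real.sqrt (κ / m))
    (hL₂ : L₂ = σ / β + κ * (1 - ρ ^ 2))
    (p : ℝ) (hp₀ : 0 ≤ p) (hpκ : p ≤ κ) :
    let Aobs : Matrix (Fin 2) (Fin 2) ℝ := !![-L₁, -(1 / m); p + σ / β - L₂, 0]
    let lam₁ : ℝ := -ρ * Real.sqrt (κ / m) + Real.sqrt ((κ - p) / m)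
    let lam₂ : ℝ := -ρ * Real.sqrt (κ / m) - Real.sqrt ((κ - p) / m)
    Aobs.charpoly = (X - C lam₁) * (X - C lam₂) ∧ lam₁ < 0 ∧ lam₂ < 0 := by
  intro Aobs lam₁ lam₂
  have hκm : (0:ℝ) ≤ κ / m := le_of_lt (div_pos hκ hm)
  have hκpm : (0:ℝ) ≤ (κ - p) / m := div_nonneg (by linarith) hm.le
  have hs1 : Real.sqrt (κ / m) ^ 2 = κ / m := Real.sq_sqrt hκm
  have hs2 : Real.sqrt ((κ - p) / m) ^ 2 = (κ - p) / m := Real.sq_sqrt hκpm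
  have hsum : lam₁ + lam₂ = -L₁ := by
    simp only [lam₁, lam₂, hL₁]; ring
  have hprod : lam₁ * lam₂ = (p + σ / β - L₂) / m := by
    have : lam₁ * lam₂ = ρ ^ 2 * (Real.sqrt (κ / m) ^ 2) - Real.sqrt ((κ - p) / m) ^ 2 := by
      simp only [lam₁, lam₂]; ring
    rw [this, hs1, hs2, hL₂]
    field_simp
    ring
  constructor
  · have hch : Aobs.charpoly = X ^ 2 - C (lam₁ + lam₂) * X + C (lam₁ * lam₂) := by
      rw [hsum, hprod]
      rw [Matrix.charpoly, Matrix.det_fin_two]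
      simp [Matrix.charmatrix_apply, Aobs]
      rw [show (p + σ / β - L₂) / m = m⁻¹ * p + m⁻¹ * (σ / β) - m⁻¹ * L₂ by ring,
        C_sub, C_add, C_mul, C_mul, C_mul]
      ring
    rw [hch]
    simp [map_add, map_mul]
    ring
  · have hlt : Real.sqrt ((κ - p) / m) < ρ * Real.sqrt (κ / m) := by
      have h1 : Real.sqrt ((κ - p) / m) ≤ Real.sqrt (κ / m) :=
        Real.sqrt_le_sqrt (by gcongr <;> linarith)
      have h2 : Real.sqrt (κ / m) < ρ * Real.sqrt (κ / m) := by
        have hpos : 0 < Real.sqrt (κ / m) := Real.sqrt_pos.2 (div_pos hκ hm)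
        nlinarith
      linarith
    have hnn : 0 ≤ Real.sqrt ((κ - p) / m) := Real.sqrt_nonneg _
    constructor
    · simp only [lam₁]; linarith
    · simp only [lam₂]; linarith
end
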